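/- For any word γ in {NE, D}^* (viewed as a path by concatenation), every element of the sequence φ(γ) produced by the algorithm (which repeatedly swaps the rightmost east step not followed by an east step with the following letter) is a Schröder path; moreover if γ is a Schröder path with d diagonal steps, every element of φ(γ) is a Schröder path with d diagonal steps. -/

import Mathlib

open scoped Classical

inductive Step : Type
  | N | E | D
deriving DecidableEq, Repr

instance : Fintype Step :=
  ⟨{Step.N, Step.E, Step.D}, by intro x; cases x <;> simp⟩

open Step

/-- number of occurrences of the letter `s` in the word `w` -/
def cnt (s : Step) (w : List Step) : ℕ := w.count s

/-- Schröder (or Dyck, if no `D`s) path in an `n × n` grid: every prefix has at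
least as many `N`s as `E`s, and the totals agree. -/
def IsSchroeder (w : List Step) : Prop :=
  (∀ p : List Step, p <+: w → cnt E p ≤ cnt N p) ∧ cnt N w = cnt E w

/-- words that are concatenations of blocks `NE` and `D` -/
inductive IsNED : List Step → Prop
  | nil : IsNED []
  | ne {w} : IsNED w → IsNED (N :: E :: w)
  | d {w} : IsNED w → IsNED (D :: w)

/-- area of a Schröder path: the number of lower triangles between the path and the
main diagonal, computed as the sum over `N` and `D` steps of the height
`#N - #E` of the starting point of the step above the diagonal. -/
def areaAux : ℕ → List Step → ℕ
  | _, [] => 0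
  | h, N :: w => h + areaAux (h+1) w
  | h, D :: w => h + areaAux h w
  | h, E :: w => areaAux (h-1) w

def area (w : List Step) : ℕ := areaAux 0 w

/-- area of an `N/E` lattice path in a rectangular grid: the number of boxes under
the path, i.e. the sum over `E` steps of the number of `N` steps before it. -/
def areaNEAux : ℕ → List Step → ℕ
  | _, [] => 0
  | h, N :: w => areaNEAux (h+1) w
  | h, E :: w => h + areaNEAux h w
  | h, D :: w => areaNEAux h w

def areaNE (w : List Step) : ℕ := areaNEAux 0 w

/-- number of `N`s occurring before the `(j+1)`-st `E` (`j` is 0-indexed);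
this is the height of the path above the horizontal interval `[j, j+1]`. -/
def nBefore : List Step → ℕ → ℕ
  | [], _ => 0
  | N :: w, j => 1 + nBefore w j
  | E :: w, j => if j = 0 then 0 else nBefore w (j-1)
  | D :: w, j => nBefore w j

/-- number of `E`s occurring before the `(i+1)`-st `N` (`i` is 0-indexed). -/
def eBefore : List Step → ℕ → ℕ
  | [], _ => 0
  | E :: w, i => 1 + eBefore w i
  | N :: w, i => if i = 0 then 0 else eBefore w (i-1)
  | D :: w, i => eBefore w i

/-- number of `D`s occurring after the `e`-th `E` (`e` is 1-indexed). -/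
def dAfterE : List Step → ℕ → ℕ
  | [], _ => 0
  | E :: w, e => if e ≤ 1 then cnt D w else dAfterE w (e-1)
  | D :: w, e => dAfterE w e
  | N :: w, e => dAfterE w e

/-- Combined computation of `bounce(Γ(γ)) + numph(γ)` along the bounce path of
`Γ(γ)`.  Here `g` is the Schröder path, `w = Γ(g)` is the underlying Dyck path,
`nn` its size; the bounce path has corners (peaks) at the positions
`j₀ = 0, jₖ₊₁ = nBefore w jₖ`; each intermediate return `jₖ₊₁ < nn` contributes
`nn - jₖ₊₁` to the bounce of `Γ(g)`, and the peak with corner at `jₖ` is the start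
of the `(jₖ+1)`-st east step, contributing to numph the number of diagonal steps of
`g` above it, i.e. after that east step. -/
def bounceAux (g w : List Step) (nn : ℕ) : ℕ → ℕ → ℕ
  | 0, _ => 0
  | fuel+1, j =>
      dAfterE g (j+1) +
        (if nn ≤ nBefore w j ∨ nBefore w j ≤ j then 0
         else (nn - nBefore w j) + bounceAux g w nn fuel (nBefore w j))

/-- the bounce statistic of a Schröder path: `bounce(Γ(γ)) + numph(γ)` -/
def bounce (g : List Step) : ℕ :=
  let w := g.filter (fun s => s ≠ D)
  let nn := cnt E w
  if nn = 0 then 0 else bounceAux g w nn g.length 0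

/-- the (signed) area coordinate `a_i = m·i - (#E before the (i+1)-st N)` of line `i`
(0-indexed) for a path in an `n × mn` grid. -/
def aLine (m : ℕ) (g : List Step) (i : ℕ) : ℤ := (m : ℤ) * i - eBefore g i

/-- an `(n, mn)`-Dyck path: `n` north steps, `mn` east steps, no diagonal steps,
staying weakly above the main diagonal. -/
def IsParkingPath (n m : ℕ) (g : List Step) : Prop :=
  (∀ s ∈ g, s ≠ D) ∧ cnt N g = n ∧ cnt E g = m * n ∧
    ∀ p : List Step, p <+: g → cnt E p ≤ m * cnt N p

/-- an `(n, mn)`-parking function: an `(n,mn)`-Dyck path labelled by a permutation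
`w` of `{0, …, n-1}` whose labels increase within each column. -/
def IsParking (n m : ℕ) (g : List Step) (w : Fin n → Fin n) : Prop :=
  IsParkingPath n m g ∧ Function.Bijective w ∧
    ∀ i j : Fin n, (j : ℕ) = (i : ℕ) + 1 → eBefore g (i : ℕ) = eBefore g (j : ℕ) → w i < w j

/-- the diagonal inversion statistic of an `(n, mn)`-parking function -/
def dinv (n m : ℕ) (g : List Step) (w : Fin n → Fin n) : ℤ :=
  ∑ i : Fin n, ∑ j : Fin n,
    if (i : ℕ) < (j : ℕ) then
      (if w i < w j then max 0 ((m : ℤ) - |aLine m g (i : ℕ) - aLine m g (j : ℕ)|) else 0) +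
        (if w j < w i then max 0 ((m : ℤ) - |aLine m g (j : ℕ) - aLine m g (i : ℕ) + 1|) else 0)
    else 0

/-- the number of descents of the word `w` -/
def desNum (n : ℕ) (w : Fin n → Fin n) : ℕ :=
  ((Finset.range (n-1)).filter fun i =>
    ∃ hj : i + 1 < n, w ⟨i+1, hj⟩ < w ⟨i, Nat.lt_of_succ_lt hj⟩).card

/-- the major index of the word `w` (with positions 1-indexed as usual) -/
def majStat (n : ℕ) (w : Fin n → Fin n) : ℕ :=
  ∑ i ∈ (Finset.range (n-1)).filter (fun i =>
    ∃ hj : i + 1 < n, w ⟨i+1, hj⟩ < w ⟨i, Nat.lt_of_succ_lt hj⟩), (i+1)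

/-- the reading word of a labelled path in an `n × mn` grid: labels are read along
diagonals parallel to the main diagonal, starting with the farthest diagonal,
each diagonal being read from top-right to bottom-left. -/
def readWord (n m : ℕ) (g : List Step) (lab : ℕ → ℕ) : List ℕ :=
  ((List.range (m * n + 1)).map fun k =>
    (((List.range n).reverse.filter fun i => aLine m g i = (m * n : ℤ) - k).map lab)).flatten

/-- the labelling function `ℕ → ℕ` associated to a permutation of `Fin n` -/
def labOf {n : ℕ} (w : Fin n → Fin n) : ℕ → ℕ :=
  fun i => if h : i < n then (w ⟨i, h⟩ : ℕ) else 0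

/-- one step of the algorithm `φ`, on the reversed word: find the rightmost
(i.e. first in the reversed word) east step not followed by an east step,
and swap it with the letter following it. -/
def phiRevAux : List Step → List Step
  | a :: E :: t => if a ≠ E then E :: a :: t else a :: phiRevAux (E :: t)
  | a :: t => a :: phiRevAux t
  | [] => []

/-- one step of the algorithm `φ` -/
def phiStep (w : List Step) : List Step := (phiRevAux w.reverse).reverse

/-- the sequence `φ(γ) = (γ₀, γ₁, …, γ_{bounce γ})` produced by the algorithm -/
def phiSeq (g : List Step) : List (List Step) :=
  (List.range (bounce g + 1)).map fun i => phiStep^[i] g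

/-- the union of all sequences `φ(γ)` over area-0 Schröder paths with `n` blocks -/
def phiUniv (n : ℕ) : Set (List Step) :=
  {p | ∃ g, IsNED g ∧ cnt N g + cnt D g = n ∧ p ∈ phiSeq g}

/-- the map replacing each block `NE` by `N` and each `D` by `E` -/
def theta : List Step → List Step
  | N :: E :: w => N :: theta w
  | D :: w => E :: theta w
  | _ :: w => theta w
  | [] => []

/-- the cells of the hook-shaped Young diagram `(d, 1^{n-d})` (row 0 is the arm). -/
def hookCells (n d : ℕ) : Finset (ℕ × ℕ) :=
  ((Finset.range d).image fun c => ((0 : ℕ), c)) ∪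
    ((Finset.range (n - d + 1)).image fun r => (r, (0 : ℕ)))

/-- a standard Young tableau of hook shape `(d, 1^{n-d})`: `pos i` is the cell
`(row, column)` containing the entry `i+1`; entries increase along rows and columns. -/
structure HookSYT (n d : ℕ) where
  pos : Fin n → ℕ × ℕ
  mem : ∀ i, pos i ∈ hookCells n d
  inj : Function.Injective pos
  rowInc : ∀ i j : Fin n, (pos i).1 = (pos j).1 → (pos i).2 < (pos j).2 → i < j
  colInc : ∀ i j : Fin n, (pos i).2 = (pos j).2 → (pos i).1 < (pos j).1 → i < j

/-- the descent set of a standard Young tableau: entries `i ∈ {1, …, n-1}` such that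
the entry `i+1` lies in a strictly higher row than `i`. -/
def Des {n d : ℕ} (τ : HookSYT n d) : Finset ℕ :=
  (Finset.Icc 1 (n-1)).filter fun i =>
    ∃ hi : i < n, ∃ hi' : i - 1 < n, (τ.pos ⟨i - 1, hi'⟩).1 < (τ.pos ⟨i, hi⟩).1

/-- the major index of a standard Young tableau -/
def majT {n d : ℕ} (τ : HookSYT n d) : ℕ := ∑ i ∈ Des τ, i

/-- the number of descents of a standard Young tableau -/
def desT {n d : ℕ} (τ : HookSYT n d) : ℕ := (Des τ).card

/-- the maximum of the descent set -/
def maxDes {n d : ℕ} (τ : HookSYT n d) : ℕ := (Des τ).sup id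

/-- the map `M_{n,d}`: the path `γ₁γ₂⋯γₙ` with `γₙ = NE`, `γ_{n-i} = NE` if
`i ∈ Des τ` and `γ_{n-i} = D` otherwise -/
def Mmap (n d : ℕ) (τ : HookSYT n d) : List Step :=
  (((List.range n).map fun j =>
    if j = n - 1 then [N, E]
    else if (n - 1 - j) ∈ Des τ then [N, E] else [D])).flatten

/-- the map `S_{n,d}`: the path `γ₁⋯γ_{n-1}` with `γ_{n-i} = NNEE` if
`i = max Des τ` and `1 ∈ Des τ`, `γ_{n-i} = NDE` if `i = max Des τ` and
`1 ∉ Des τ`, `γ_{n-i} = NE` if `i = 1` or `i ∈ Des τ ∖ {max Des τ}`, and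
`γ_{n-i} = D` otherwise. -/
def Smap (n d : ℕ) (τ : HookSYT n d) : List Step :=
  (((List.range (n-1)).map fun j =>
    if (n - 1 - j) = maxDes τ then (if 1 ∈ Des τ then [N,N,E,E] else [N,D,E])
    else if (n - 1 - j) = 1 ∨ (n - 1 - j) ∈ Des τ then [N,E] else [D])).flatten

/-- the set `V_{n,d}` of Schröder paths of the form `Dʲ NNEE u` or `Dʲ NDE u`
with `u ∈ {NE,D}* NE`, having `n-d+1` north steps and `d-1` diagonal steps. -/
def Vset (n d : ℕ) : Set (List Step) :=
  {g | (∃ j u, IsNED u ∧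
      (g = List.replicate j D ++ [N,N,E,E] ++ (u ++ [N,E]) ∨
       g = List.replicate j D ++ [N,D,E] ++ (u ++ [N,E]))) ∧
     cnt N g = n - d + 1 ∧ cnt D g = d - 1}

/-- Schröder paths in an `n × n` grid with `dd` diagonal steps, area `a`,
ending with `NE` -/
def SchT (n dd a : ℕ) : Set (List Step) :=
  {g | IsSchroeder g ∧ cnt D g = dd ∧ cnt N g = n - dd ∧ area g = a ∧ ∃ u, g = u ++ [N, E]}

/-- the 'upper' forms: `Dʲ NNEE γ' NE NE` or `γ' NE Dʲ NNEE γ''` -/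
def UpperForm (g : List Step) : Prop :=
  (∃ j u, IsNED u ∧ g = List.replicate j D ++ [N,N,E,E] ++ u ++ [N,E,N,E]) ∨
  (∃ u j v, IsNED u ∧ g = u ++ [N,E] ++ List.replicate j D ++ [N,N,E,E] ++ v)

/-- the 'lower' forms: `Dʲ NNEE γ' D NE` or `γ' NDE Dʲ NE γ''` -/
def LowerForm (g : List Step) : Prop :=
  (∃ j u, IsNED u ∧ g = List.replicate j D ++ [N,N,E,E] ++ u ++ [D,N,E]) ∨
  (∃ u j v, IsNED u ∧ g = u ++ [N,D,E] ++ List.replicate j D ++ [N,E] ++ v)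

/-- the number of distinct columns of the path -/
def Tcols (n : ℕ) (g : List Step) : ℕ :=
  ((Finset.range n).image fun i => eBefore g i).card

/-- the `q`-integer `[k]_q = 1 + q + ⋯ + q^{k-1}` as a polynomial -/
noncomputable def qInt (k : ℕ) : Polynomial ℤ := ∑ i ∈ Finset.range k, Polynomial.X ^ i

/-- the `q`-factorial `[k]!_q` -/
noncomputable def qFact (k : ℕ) : Polynomial ℤ := ∏ i ∈ Finset.range k, qInt (i+1)

/-!
A step of `φ` either fixes the word or turns a factor `E a` into `a E`. Moving an east step
to the right can only raise the height `#N - #E` of the prefixes, so the step preserves the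
Schröder condition, and being a transposition it preserves the letter counts and the length.
A word in `{NE, D}*` is a concatenation of Schröder paths, hence a Schröder path itself.
-/

theorem List.prefix_append_cases {α : Type*} {p u l : List α} (h : p <+: u ++ l) :
    p <+: u ∨ ∃ q, q <+: l ∧ p = u ++ q := by
  rcases List.prefix_or_prefix_of_prefix h (List.prefix_append u l) with hpu | ⟨q, rfl⟩
  · exact Or.inl hpu
  · exact Or.inr ⟨q, (List.prefix_append_right_inj u).1 h, rfl⟩

theorem cnt_append (s : Step) (u v : List Step) : cnt s (u ++ v) = cnt s u + cnt s v :=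
  List.count_append

theorem IsSchroeder.append {u v : List Step} (hu : IsSchroeder u) (hv : IsSchroeder v) :
    IsSchroeder (u ++ v) := by
  obtain ⟨hu, hu_bal⟩ := hu
  obtain ⟨hv, hv_bal⟩ := hv
  refine ⟨fun p hp => ?_, by rw [cnt_append, cnt_append, hu_bal, hv_bal]⟩
  rcases List.prefix_append_cases hp with hpu | ⟨q, hq, rfl⟩
  · exact hu p hpu
  · have := hv q hq
    rw [cnt_append, cnt_append, hu_bal]
    omega

theorem isSchroeder_nil : IsSchroeder [] :=
  ⟨fun p hp => by simp [List.prefix_nil.1 hp, cnt], rfl⟩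

theorem isSchroeder_NE : IsSchroeder [N, E] :=
  ⟨fun p hp => by
    simp only [List.prefix_cons_iff, List.prefix_nil] at hp
    rcases hp with rfl | ⟨_, rfl, rfl | ⟨_, rfl, rfl⟩⟩ <;> decide, rfl⟩

theorem isSchroeder_D : IsSchroeder [D] :=
  ⟨fun p hp => by
    simp only [List.prefix_cons_iff, List.prefix_nil] at hp
    rcases hp with rfl | ⟨_, rfl, rfl⟩ <;> decide, rfl⟩

theorem IsNED.isSchroeder {g : List Step} (h : IsNED g) : IsSchroeder g := by
  induction h with
  | nil => exact isSchroeder_nil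
  | ne _ ih => exact IsSchroeder.append isSchroeder_NE ih
  | d _ ih => exact IsSchroeder.append isSchroeder_D ih

theorem isSchroeder_swap_east {u v : List Step} {a : Step} (h : IsSchroeder (u ++ E :: a :: v)) :
    IsSchroeder (u ++ a :: E :: v) := by
  obtain ⟨hpre, hbal⟩ := h
  have hswap (t : List Step) (s : Step) : cnt s (u ++ a :: E :: t) = cnt s (u ++ E :: a :: t) :=
    ((List.Perm.swap E a t).append_left u).count_eq s
  refine ⟨fun p hp => ?_, by rw [hswap, hswap, hbal]⟩
  rcases List.prefix_append_cases hp with hpu | ⟨q, hq, rfl⟩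
  · exact hpre p (hpu.trans (List.prefix_append u _))
  have hpre' {t : List Step} (ht : t <+: E :: a :: v) := hpre _ ((List.prefix_append_right_inj u).2 ht)
  rcases List.prefix_cons_iff.1 hq with rfl | ⟨t, rfl, ht⟩
  · simpa using hpre' List.nil_prefix
  rcases List.prefix_cons_iff.1 ht with rfl | ⟨t', rfl, ht'⟩
  · have hold := hpre' (t := [E, a]) ⟨v, rfl⟩
    have hcnt (s : Step) : cnt s (u ++ [E, a]) = cnt s (u ++ [a]) + cnt s [E] := by
      rw [← cnt_append, List.append_assoc]
      exact ((List.Perm.swap a E []).append_left u).count_eq s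
    rw [hcnt, hcnt] at hold
    change _ + 1 ≤ _ + 0 at hold
    exact Nat.le_of_succ_le hold
  · rw [hswap, hswap]
    exact hpre' ((List.prefix_cons_inj _).2 ((List.prefix_cons_inj _).2 ht'))

theorem phiRevAux_eq_self_or_swap (r : List Step) :
    phiRevAux r = r ∨ ∃ s a t, r = s ++ a :: E :: t ∧ phiRevAux r = s ++ E :: a :: t := by
  induction r using phiRevAux.induct with
  | case1 a t ha => exact Or.inr ⟨[], a, t, rfl, if_pos ha⟩
  | case2 a t ha ih =>
    rw [phiRevAux.eq_1, if_neg ha]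
    rcases ih with ih | ⟨s, b, t', hr, ih⟩
    · exact Or.inl (by rw [ih])
    · exact Or.inr ⟨a :: s, b, t', by rw [hr]; rfl, by rw [ih]; rfl⟩
  | case3 a t ht ih =>
    rw [phiRevAux.eq_2 a t ht]
    rcases ih with ih | ⟨s, b, t', hr, ih⟩
    · exact Or.inl (by rw [ih])
    · exact Or.inr ⟨a :: s, b, t', by rw [hr]; rfl, by rw [ih]; rfl⟩
  | case4 => exact Or.inl phiRevAux.eq_3

theorem phiStep_eq_self_or_swap (w : List Step) :
    phiStep w = w ∨ ∃ u a v, w = u ++ E :: a :: v ∧ phiStep w = u ++ a :: E :: v := by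
  rcases phiRevAux_eq_self_or_swap w.reverse with h | ⟨s, a, t, hw, h⟩
  · exact Or.inl (by rw [phiStep, h, List.reverse_reverse])
  · refine Or.inr ⟨t.reverse, a, s.reverse, ?_, by simp [phiStep, h]⟩
    rw [← List.reverse_reverse w, hw]
    simp

theorem phiStep_perm (w : List Step) : (phiStep w).Perm w := by
  rcases phiStep_eq_self_or_swap w with h | ⟨u, a, v, rfl, h⟩
  · rw [h]
  · rw [h]
    exact (List.Perm.swap E a v).append_left u

theorem isSchroeder_phiStep {w : List Step} (h : IsSchroeder w) : IsSchroeder (phiStep w) := by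
  rcases phiStep_eq_self_or_swap w with hw | ⟨u, a, v, rfl, hw⟩
  · rwa [hw]
  · rw [hw]
    exact isSchroeder_swap_east h

theorem phiStep_iterate_perm (w : List Step) (n : ℕ) : (phiStep^[n] w).Perm w :=
  Function.Iterate.rec (fun x => x.Perm w) (List.Perm.refl w)
    (fun x hx => (phiStep_perm x).trans hx) n

theorem isSchroeder_phiStep_iterate {w : List Step} (h : IsSchroeder w) (n : ℕ) :
    IsSchroeder (phiStep^[n] w) :=
  Function.Iterate.rec IsSchroeder h (fun _ hx => isSchroeder_phiStep hx) n

/-- For any word `γ ∈ {NE,D}*`, every element of the sequence `φ(γ)` is a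
Schröder path; moreover if `γ ∈ Sch_{n,d}` then `φ(γ) ⊆ Sch_{n,d}` (the number of
diagonal steps, and the size, are preserved). -/
theorem stmt2 (g : List Step) (h : IsNED g) :
    ∀ p ∈ phiSeq g, IsSchroeder p ∧ cnt Step.D p = cnt Step.D g ∧ p.length = g.length := by
  intro p hp
  obtain ⟨n, -, rfl⟩ := List.mem_map.1 hp
  exact ⟨isSchroeder_phiStep_iterate h.isSchroeder n, (phiStep_iterate_perm g n).count_eq D,
    (phiStep_iterate_perm g n).length_eq⟩
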